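/- Let A be a filtered P₀-algebra as in the shifted cotangent bundle setting (FᵖA the ideal generated by degree ≥ p elements, I = F¹A). Then [I⁽²⁾ ∩ A⁰, FᵖA] ⊆ F^{p+1}A for all p ≥ 0; i.e., degree-zero elements of the square of the augmentation ideal act trivially on the associated graded gr A = ⊕ₚ FᵖA/F^{p+1}A. -/

import Mathlib

/-- A `P₀`-algebra over a field `k`: a ℤ-graded (graded-commutative) algebra with a
Poisson bracket of degree `1` satisfying graded antisymmetry, Leibniz rule and
graded Jacobi identity. -/
structure P0Data (k A : Type*) [Field k] [Ring A] [Algebra k A] where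
  grade : ℤ → Submodule k A
  internal : DirectSum.IsInternal grade
  one_mem : (1 : A) ∈ grade 0
  mul_mem : ∀ {r s : ℤ} {a b : A}, a ∈ grade r → b ∈ grade s → a * b ∈ grade (r + s)
  gcomm : ∀ {r s : ℤ} {a b : A}, a ∈ grade r → b ∈ grade s →
    a * b = ((-1 : k) ^ (r * s)) • (b * a)
  bracket : A →ₗ[k] A →ₗ[k] A
  bracket_mem : ∀ {r s : ℤ} {a b : A}, a ∈ grade r → b ∈ grade s →
    bracket a b ∈ grade (r + s + 1)
  antisymm : ∀ {r s : ℤ} {a b : A}, a ∈ grade r → b ∈ grade s →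
    bracket a b = -(((-1 : k) ^ ((r - 1) * (s - 1))) • bracket b a)
  leibniz : ∀ {r s : ℤ} {a b : A} (c : A), a ∈ grade r → b ∈ grade s →
    bracket (a * b) c = a * bracket b c + ((-1 : k) ^ (r * s)) • (b * bracket a c)
  jacobi : ∀ {r s t : ℤ} {a b c : A}, a ∈ grade r → b ∈ grade s → c ∈ grade t →
    ((-1 : k) ^ ((r - 1) * (t - 1))) • bracket (bracket a b) c +
      ((-1 : k) ^ ((s - 1) * (r - 1))) • bracket (bracket b c) a +
      ((-1 : k) ^ ((t - 1) * (s - 1))) • bracket (bracket c a) b = 0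

/-- The ideal `FᵖA` generated by homogeneous elements of degree at least `p`. -/
def P0Data.filt {k A : Type*} [Field k] [Ring A] [Algebra k A] (P : P0Data k A) (p : ℤ) :
    Submodule k A :=
  Submodule.span k {x | ∃ (a b : A) (q : ℤ), p ≤ q ∧ b ∈ P.grade q ∧ x = a * b}

/-- The powers `I⁽ʲ⁾` of the ideal `I = F¹A` generated by elements of positive degree:
`I⁽⁰⁾ = A`, `I⁽ʲ⁺¹⁾ = I · I⁽ʲ⁾`. -/
def P0Data.ipow {k A : Type*} [Field k] [Ring A] [Algebra k A] (P : P0Data k A) :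
    ℕ → Submodule k A
  | 0 => ⊤
  | j + 1 => Submodule.span k {x | ∃ a ∈ P.filt 1, ∃ b ∈ P.ipow j, x = a * b}

/-!
Bracketing with a homogeneous element of degree `s` lowers the filtration by at most
`max 0 (-s - 1)`: on a generator `c * b` of `FᵖA` (with `b` homogeneous of degree `≥ p`) the
Leibniz rule gives `[c * b, f] = c [b, f] ± b [c, f]`, and `[b, f]` has degree `≥ p + s + 1`.
In particular the bracket with an element of degree `≥ -1` preserves the filtration.

Projecting to degree zero, `I⁽²⁾ ∩ A⁰` is spanned by products `e * f` of homogeneous elements of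
`F¹A` of degrees `r` and `-r`. By Leibniz `[e * f, x] = e [f, x] ± f [e, x]`, and since
`e ∈ F^{max 1 r}` while `[f, x] ∈ F^{p + 1 - max 1 r}`, both terms lie in `F^{p+1}`.
-/

namespace P0Data

open scoped Pointwise

variable {k A : Type*} [Field k] [Ring A] [Algebra k A] (P : P0Data k A)

def homogeneous : Set A := {a | ∃ i, a ∈ P.grade i}

theorem homogeneous_induction {motive : A → Prop} (a : A)
    (mem : ∀ i, ∀ x ∈ P.grade i, motive x) (zero : motive 0)
    (add : ∀ x y, motive x → motive y → motive (x + y)) : motive a :=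
  Submodule.iSup_induction (x := a) P.grade (by rw [P.internal.submodule_iSup_eq_top]; trivial)
    mem zero add

variable {P}

theorem filt_anti : Antitone P.filt := fun _ _ h =>
  Submodule.span_mono <| by
    rintro x ⟨a, b, q, hq, hb, rfl⟩
    exact ⟨a, b, q, h.trans hq, hb, rfl⟩

theorem mem_filt_of_mem_grade {p q : ℤ} {b : A} (hb : b ∈ P.grade q) (h : p ≤ q) :
    b ∈ P.filt p :=
  Submodule.subset_span ⟨1, b, q, h, hb, (one_mul b).symm⟩

theorem mem_filt_zero (c : A) : c ∈ P.filt 0 :=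
  Submodule.subset_span ⟨c, 1, 0, le_rfl, P.one_mem, (mul_one c).symm⟩

theorem mul_mem_filt_left {p : ℤ} (c : A) {x : A} (hx : x ∈ P.filt p) : c * x ∈ P.filt p := by
  induction hx using Submodule.span_induction with
  | mem x hx =>
    obtain ⟨a, b, q, hq, hb, rfl⟩ := hx
    exact Submodule.subset_span ⟨c * a, b, q, hq, hb, (mul_assoc c a b).symm⟩
  | zero => simpa only [mul_zero] using (P.filt p).zero_mem
  | add x y _ _ hx hy => simpa only [mul_add] using (P.filt p).add_mem hx hy
  | smul t x _ hx => simpa only [mul_smul_comm] using (P.filt p).smul_mem t hx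

theorem mul_mem_filt_of_mem_grade {q n : ℤ} {b y : A} (hb : b ∈ P.grade q)
    (hy : y ∈ P.filt n) : b * y ∈ P.filt (q + n) := by
  induction hy using Submodule.span_induction with
  | mem y hy =>
    obtain ⟨a, b', q', hq', hb', rfl⟩ := hy
    induction a using P.homogeneous_induction with
    | mem t c hc =>
      have hswap : b * (c * b') = ((-1 : k) ^ (q * t)) • (c * (b * b')) := by
        rw [← mul_assoc, P.gcomm hb hc, smul_mul_assoc, mul_assoc]
      rw [hswap]
      exact (P.filt _).smul_mem _
        (Submodule.subset_span ⟨c, b * b', q + q', by omega, P.mul_mem hb hb', rfl⟩)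
    | zero => simpa only [zero_mul, mul_zero] using (P.filt _).zero_mem
    | add c d hc hd => simpa only [add_mul, mul_add] using (P.filt _).add_mem hc hd
  | zero => simpa only [mul_zero] using (P.filt _).zero_mem
  | add y z _ _ hy hz => simpa only [mul_add] using (P.filt _).add_mem hy hz
  | smul t y _ hy => simpa only [mul_smul_comm] using (P.filt _).smul_mem t hy

theorem mul_mem_filt {m n : ℤ} {x y : A} (hx : x ∈ P.filt m) (hy : y ∈ P.filt n) :
    x * y ∈ P.filt (m + n) := by
  induction hx using Submodule.span_induction with
  | mem x hx =>
    obtain ⟨a, b, q, hq, hb, rfl⟩ := hx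
    rw [mul_assoc]
    exact mul_mem_filt_left a (filt_anti (by omega) (mul_mem_filt_of_mem_grade hb hy))
  | zero => simpa only [zero_mul] using (P.filt _).zero_mem
  | add x z _ _ hx hz => simpa only [add_mul] using (P.filt _).add_mem hx hz
  | smul t x _ hx => simpa only [smul_mul_assoc] using (P.filt _).smul_mem t hx

theorem mul_mem_filt_right {p : ℤ} {x : A} (hx : x ∈ P.filt p) (c : A) : x * c ∈ P.filt p := by
  simpa only [add_zero] using mul_mem_filt hx (mem_filt_zero c)

theorem filt_eq_span_homogeneous (p : ℤ) :
    P.filt p = Submodule.span k (P.homogeneous ∩ P.filt p) := by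
  refine le_antisymm (Submodule.span_le.2 ?_) (Submodule.span_le.2 Set.inter_subset_right)
  rintro x ⟨a, b, q, hq, hb, rfl⟩
  rw [SetLike.mem_coe]
  induction a using P.homogeneous_induction with
  | mem t c hc =>
    exact Submodule.subset_span
      ⟨⟨t + q, P.mul_mem hc hb⟩, Submodule.subset_span ⟨c, b, q, hq, hb, rfl⟩⟩
  | zero => simpa only [zero_mul] using Submodule.zero_mem _
  | add c d hc hd => simpa only [add_mul] using Submodule.add_mem _ hc hd

theorem bracket_mem_filt {s p n : ℤ} {f x : A} (hf : f ∈ P.grade s) (hx : x ∈ P.filt p)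
    (hnp : n ≤ p) (hns : n ≤ p + s + 1) : P.bracket f x ∈ P.filt n := by
  induction hx using Submodule.span_induction with
  | mem x hx =>
    obtain ⟨a, b, q, hq, hb, rfl⟩ := hx
    induction a using P.homogeneous_induction with
    | mem t c hc =>
      rw [P.antisymm hf (P.mul_mem hc hb), P.leibniz f hc hb]
      have hcb : c * P.bracket b f ∈ P.filt n :=
        mul_mem_filt_left c (mem_filt_of_mem_grade (P.bracket_mem hb hf) (by omega))
      have hbc : b * P.bracket c f ∈ P.filt n :=
        filt_anti (by omega) (mul_mem_filt_of_mem_grade hb (mem_filt_zero _))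
      exact Submodule.neg_mem _ <| Submodule.smul_mem _ _ <|
        Submodule.add_mem _ hcb (Submodule.smul_mem _ _ hbc)
    | zero => simpa only [zero_mul, map_zero] using Submodule.zero_mem _
    | add c d hc hd => simpa only [add_mul, map_add] using Submodule.add_mem _ hc hd
  | zero => simpa only [map_zero] using Submodule.zero_mem _
  | add x y _ _ hx hy => simpa only [map_add] using Submodule.add_mem _ hx hy
  | smul t x _ hx => simpa only [map_smul] using Submodule.smul_mem _ t hx

theorem mul_bracket_mem_filt_succ {r s p : ℤ} {e f x : A} (he : e ∈ P.grade r)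
    (he1 : e ∈ P.filt 1) (hf : f ∈ P.grade s) (hrs : -r ≤ s) (hx : x ∈ P.filt p) :
    e * P.bracket f x ∈ P.filt (p + 1) := by
  have he' : e ∈ P.filt (max 1 r) := by
    rcases max_choice 1 r with h | h <;> rw [h]
    exacts [he1, mem_filt_of_mem_grade he le_rfl]
  have hfx : P.bracket f x ∈ P.filt (p + 1 - max 1 r) :=
    bracket_mem_filt hf hx (by omega) (by omega)
  simpa only [add_sub_cancel] using mul_mem_filt he' hfx

theorem bracket_mul_mem_filt_succ {r p : ℤ} {e f x : A} (he : e ∈ P.grade r)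
    (he1 : e ∈ P.filt 1) (hf : f ∈ P.grade (-r)) (hf1 : f ∈ P.filt 1) (hx : x ∈ P.filt p) :
    P.bracket (e * f) x ∈ P.filt (p + 1) := by
  rw [P.leibniz x he hf]
  exact Submodule.add_mem _ (mul_bracket_mem_filt_succ he he1 hf le_rfl hx)
    (Submodule.smul_mem _ _ (mul_bracket_mem_filt_succ hf hf1 he (neg_neg r).le hx))

theorem ipow_succ_le (j : ℕ) : P.ipow (j + 1) ≤ P.filt 1 * P.ipow j :=
  Submodule.span_le.2 <| by
    rintro _ ⟨a, ha, b, hb, rfl⟩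
    exact Submodule.mul_mem_mul ha hb

theorem ipow_two_le : P.ipow 2 ≤ P.filt 1 * P.filt 1 := by
  have hipow_one : P.ipow 1 ≤ P.filt 1 :=
    (ipow_succ_le 0).trans (Submodule.mul_le.2 fun a ha b _ => mul_mem_filt_right ha b)
  exact (ipow_succ_le 1).trans (Submodule.mul_le.2 fun a ha b hb =>
    Submodule.mul_mem_mul ha (hipow_one hb))

variable (P)

noncomputable def proj (i : ℤ) : A →ₗ[k] A :=
  (P.grade i).subtype ∘ₗ DirectSum.component k ℤ (fun j => P.grade j) i ∘ₗ
    (LinearEquiv.ofBijective (DirectSum.coeLinearMap P.grade) P.internal).symm.toLinearMap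

variable {P}

theorem proj_apply_of_mem {i : ℤ} {x : A} (hx : x ∈ P.grade i) : P.proj i x = x := by
  simp [proj, ← DirectSum.apply_eq_component, P.internal.ofBijective_coeLinearMap_of_mem hx]

theorem proj_apply_of_mem_ne {i j : ℤ} (hji : j ≠ i) {x : A} (hx : x ∈ P.grade j) :
    P.proj i x = 0 := by
  simp [proj, ← DirectSum.apply_eq_component,
    P.internal.ofBijective_coeLinearMap_of_mem_ne hji hx]

variable (P)

def filtRaising (p : ℤ) : Submodule k A :=
  ⨅ x ∈ P.filt p, (P.filt (p + 1)).comap (P.bracket.flip x)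

variable {P}

theorem mem_filtRaising {p : ℤ} {a : A} :
    a ∈ P.filtRaising p ↔ ∀ x ∈ P.filt p, P.bracket a x ∈ P.filt (p + 1) := by
  simp [filtRaising, Submodule.mem_iInf]

theorem proj_zero_mul_mem_filtRaising (p : ℤ) {e f : A}
    (he : e ∈ P.homogeneous ∩ P.filt 1) (hf : f ∈ P.homogeneous ∩ P.filt 1) :
    P.proj 0 (e * f) ∈ P.filtRaising p := by
  obtain ⟨⟨r, her⟩, he1⟩ := he
  obtain ⟨⟨s, hfs⟩, hf1⟩ := hf
  by_cases hrs : r + s = 0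
  · obtain rfl : s = -r := by omega
    rw [proj_apply_of_mem (by simpa [hrs] using P.mul_mem her hfs)]
    exact mem_filtRaising.2 fun x hx => bracket_mul_mem_filt_succ her he1 hfs hf1 hx
  · rw [proj_apply_of_mem_ne hrs (P.mul_mem her hfs)]
    exact Submodule.zero_mem _

theorem mem_filtRaising_of_mem_ipow_two (p : ℤ) {a : A} (ha2 : a ∈ P.ipow 2)
    (ha0 : a ∈ P.grade 0) : a ∈ P.filtRaising p := by
  set H₁ : Set A := P.homogeneous ∩ P.filt 1
  have hspan : a ∈ Submodule.span k (P.proj 0 '' (H₁ * H₁)) := by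
    rw [← Submodule.map_span, ← proj_apply_of_mem ha0]
    refine Submodule.mem_map_of_mem ?_
    rw [← Submodule.span_mul_span, ← filt_eq_span_homogeneous]
    exact ipow_two_le ha2
  refine Submodule.span_le.2 ?_ hspan
  rintro _ ⟨_, ⟨e, he, f, hf, rfl⟩, rfl⟩
  exact proj_zero_mul_mem_filtRaising p he hf

end P0Data

theorem bracket_isq_deg0_raises_filtration_general {k A : Type*} [Field k]
    [Ring A] [Algebra k A] (P : P0Data k A) :
    ∀ p : ℤ, 0 ≤ p → ∀ a : A, a ∈ P.ipow 2 → a ∈ P.grade 0 →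
      ∀ x ∈ P.filt p, P.bracket a x ∈ P.filt (p + 1) :=
  fun p _ _ ha2 ha0 => P0Data.mem_filtRaising.1 (P0Data.mem_filtRaising_of_mem_ipow_two p ha2 ha0)

/-- Lemma l-Fitzherbert. `[I⁽²⁾ ∩ A⁰, FᵖA] ⊆ F^{p+1}A` for all `p ≥ 0`:
degree-zero elements of the square of the augmentation ideal act trivially on the
associated graded of the filtration. -/
theorem bracket_isq_deg0_raises_filtration {k A : Type*} [Field k] [CharZero k]
    [Ring A] [Algebra k A] (P : P0Data k A)
    (hMaud : ∀ (d p : ℤ), -1 ≤ d → 0 ≤ p → ∀ a ∈ P.grade d, ∀ x ∈ P.filt p,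
      P.bracket a x ∈ P.filt p) :
    ∀ p : ℤ, 0 ≤ p → ∀ a : A, a ∈ P.ipow 2 → a ∈ P.grade 0 →
      ∀ x ∈ P.filt p, P.bracket a x ∈ P.filt (p + 1) :=
  bracket_isq_deg0_raises_filtration_general P
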